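/- arXiv:2108.04638 — 5 statements merged into one kernel-verified Lean document; each statement's English description precedes it below -/
import Mathlib

section
/- Let d ≥ 2, let Λ be a unimodular lattice in ℝ^d, and let r ∈ (0, 1/4) be such that Λ contains no nonzero point of the open cube (r−1, 1−r)^d. Let 𝔘 be a Borel subset of ℝ^d that is disjoint from the union Λ + (½(r−1), ½(1−r))^d and is contained in some translate of the cube (0, 3/4)^d. Then the Lebesgue volume of 𝔘 is less than d·r. -/
open Set MeasureTheory

/-- The lattice in `ℝ^d` generated by the columns of the matrix `g`. -/
def lat {d : ℕ} (g : Matrix (Fin d) (Fin d) ℝ) : Set (Fin d → ℝ) :=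
  {v | ∃ m : Fin d → ℤ, v = g.mulVec (fun i => (m i : ℝ))}

/-!
The lattice translates of `U ∪ ½C_r` are pairwise disjoint: those of `U` because `U` has width
`3/4 < 1 - r` in every coordinate, those of `½C_r` by the assumption on `Λ`, and a translate of `U`
never meets one of `½C_r` by assumption. By Blichfeldt's principle `vol U + (1 - r)^d ≤ covol Λ = 1`,
and the strict Bernoulli inequality `(1 - r)^d > 1 - d r` for `d ≥ 2` gives `vol U < d r`.
-/

lemma one_sub_mul_lt_one_sub_pow {r : ℝ} (hr₀ : r ≠ 0) (hr₁ : r ≤ 1) {n : ℕ} (hn : 2 ≤ n) :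
    1 - n * r < (1 - r) ^ n := by
  have h := one_add_mul_self_lt_rpow_one_add (s := -r) (p := n) (by linarith) (neg_ne_zero.mpr hr₀)
    (by exact_mod_cast hn)
  simpa [← sub_eq_add_neg, Real.rpow_natCast] using h

lemma volume_pi_Ioo_const {ι : Type*} [Fintype ι] {a b : ℝ} (hab : a ≤ b) :
    volume (pi univ fun _ : ι => Ioo a b) = ENNReal.ofReal ((b - a) ^ Fintype.card ι) := by
  rw [Real.volume_pi_Ioo, Finset.prod_const, Finset.card_univ, ENNReal.ofReal_pow (sub_nonneg.2 hab)]

section Lattice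

variable {d : ℕ} (g : Matrix (Fin d) (Fin d) ℝ)

lemma zero_mem_lat : 0 ∈ lat g :=
  ⟨0, by simp [← Pi.zero_def]⟩

lemma neg_mem_lat {v : Fin d → ℝ} (hv : v ∈ lat g) : -v ∈ lat g := by
  obtain ⟨m, rfl⟩ := hv
  exact ⟨-m, by simp [← Pi.neg_def, Matrix.mulVec_neg]⟩

lemma mulVec_intCast_eq_sum (m : Fin d → ℤ) :
    g.mulVec (fun i => (m i : ℝ)) = ∑ i, m i • g.col i := by
  ext j
  simp [Matrix.mulVec, dotProduct, Finset.sum_apply, mul_comm]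

noncomputable def latBasis (hg : g.det ≠ 0) : Module.Basis (Fin d) ℝ (Fin d → ℝ) :=
  basisOfLinearIndependentOfCardEqFinrank' g.col (Matrix.linearIndependent_cols_of_det_ne_zero hg)
    (by simp)

lemma lat_eq_span (hg : g.det ≠ 0) : lat g = Submodule.span ℤ (range (latBasis g hg)) := by
  ext v
  simp only [SetLike.mem_coe, Submodule.mem_span_range_iff_exists_fun, latBasis,
    coe_basisOfLinearIndependentOfCardEqFinrank', lat, mem_ofPred_eq, mulVec_intCast_eq_sum,
    eq_comm]

lemma volume_fundamentalDomain_latBasis (hg : g.det ≠ 0) :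
    volume (ZSpan.fundamentalDomain (latBasis g hg)) = ENNReal.ofReal |g.det| := by
  rw [ZSpan.volume_fundamentalDomain, latBasis, coe_basisOfLinearIndependentOfCardEqFinrank',
    ← Matrix.det_transpose g]
  rfl

/-- Equivalently, the translates `v + S`, `v ∈ lat g`, are pairwise disjoint. -/
def IsPackingSet (S : Set (Fin d → ℝ)) : Prop :=
  ∀ x ∈ S, ∀ y ∈ S, x - y ∈ lat g → x = y

theorem volume_le_abs_det_of_isPackingSet (hg : g.det ≠ 0) {S : Set (Fin d → ℝ)}
    (hS : NullMeasurableSet S) (hS_pack : IsPackingSet g S) :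
    volume S ≤ ENNReal.ofReal |g.det| := by
  rw [← volume_fundamentalDomain_latBasis g hg]
  by_contra! hlt
  have : Countable (Submodule.span ℤ (range (latBasis g hg))).toAddSubgroup :=
    inferInstanceAs (Countable (Submodule.span ℤ (range (latBasis g hg))))
  obtain ⟨v, w, hvw, hvw_meet⟩ := exists_pair_mem_lattice_not_disjoint_vadd
    (ZSpan.isAddFundamentalDomain' (latBasis g hg) volume) hS hlt
  obtain ⟨_, ⟨x, hx, rfl⟩, y, hy, hxy⟩ := not_disjoint_iff.mp hvw_meet
  have hsub : x - y = (w : Fin d → ℝ) - v := by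
    rw [sub_eq_sub_iff_add_eq_add, add_comm]
    exact hxy.symm
  have hmem : x - y ∈ lat g := by
    rw [hsub, lat_eq_span g hg]
    exact sub_mem w.2 v.2
  obtain rfl := hS_pack x hx y hy hmem
  exact hvw (Subtype.ext (sub_eq_zero.mp (by simpa using hsub.symm))).symm

end Lattice

lemma abs_sub_lt_of_mem_Ioo {α : Type*} [AddCommGroup α] [LinearOrder α] [IsOrderedAddMonoid α]
    {a b x y : α} (hx : x ∈ Ioo a b) (hy : y ∈ Ioo a b) : |x - y| < b - a :=
  abs_sub_lt_iff.mpr ⟨sub_lt_sub hx.2 hy.1, sub_lt_sub hy.2 hx.1⟩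

section HalfCube

variable {d : ℕ} {r : ℝ}

def halfCube (d : ℕ) (r : ℝ) : Set (Fin d → ℝ) :=
  pi univ fun _ => Ioo ((r - 1) / 2) ((1 - r) / 2)

lemma measurableSet_halfCube : MeasurableSet (halfCube d r) :=
  .univ_pi fun _ => measurableSet_Ioo

lemma volume_halfCube (hr : r ≤ 1) : volume (halfCube d r) = ENNReal.ofReal ((1 - r) ^ d) := by
  rw [halfCube, volume_pi_Ioo_const (by linarith), Fintype.card_fin]
  ring_nf

variable {g : Matrix (Fin d) (Fin d) ℝ} {U : Set (Fin d → ℝ)}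

lemma eq_of_sub_mem_lat_of_abs_sub_lt (hΛ : ∀ v ∈ lat g, (∀ i, v i ∈ Ioo (r - 1) (1 - r)) → v = 0)
    {x y : Fin d → ℝ} (hxy : ∀ i, |x i - y i| < 1 - r) (hv : x - y ∈ lat g) : x = y :=
  sub_eq_zero.mp <| hΛ _ hv fun i => by simpa [neg_sub] using abs_lt.mp (hxy i)

/-- `U` packs because it is too small to contain two points differing by a nonzero lattice vector,
`½C_r` packs by the assumption on `lat g`, and the two never meet modulo `lat g` by `hdisj`. -/
lemma isPackingSet_union_halfCube (hΛ : ∀ v ∈ lat g, (∀ i, v i ∈ Ioo (r - 1) (1 - r)) → v = 0)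
    (hr : r < 1 / 4)
    (hdisj : ∀ x ∈ U, ∀ v ∈ lat g, ¬ (∀ i, x i - v i ∈ Ioo ((r - 1) / 2) ((1 - r) / 2)))
    {c : Fin d → ℝ} (hc : ∀ x ∈ U, ∀ i, x i - c i ∈ Ioo (0 : ℝ) (3 / 4)) :
    IsPackingSet g (U ∪ halfCube d r) := by
  rintro x (hxU | hxQ) y (hyU | hyQ) hv
  · refine eq_of_sub_mem_lat_of_abs_sub_lt hΛ (fun i => ?_) hv
    have := abs_sub_lt_of_mem_Ioo (hc x hxU i) (hc y hyU i)
    rw [sub_sub_sub_cancel_right] at this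
    linarith
  · exact absurd (fun i => by simpa using hyQ i (mem_univ i)) (hdisj x hxU _ hv)
  · exact absurd (fun i => by simpa using hxQ i (mem_univ i)) (hdisj y hyU _ (neg_mem_lat g hv))
  · refine eq_of_sub_mem_lat_of_abs_sub_lt hΛ (fun i => ?_) hv
    have := abs_sub_lt_of_mem_Ioo (hxQ i (mem_univ i)) (hyQ i (mem_univ i))
    linarith

lemma disjoint_halfCube
    (hdisj : ∀ x ∈ U, ∀ v ∈ lat g, ¬ (∀ i, x i - v i ∈ Ioo ((r - 1) / 2) ((1 - r) / 2))) :
    Disjoint U (halfCube d r) :=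
  disjoint_left.mpr fun x hxU hxQ =>
    hdisj x hxU 0 (zero_mem_lat g) fun i => by simpa using hxQ i (mem_univ i)

end HalfCube

theorem volume_lt_of_disjoint_from_cube_tiling
    {d : ℕ} (hd : 2 ≤ d) (g : Matrix (Fin d) (Fin d) ℝ) (hg : g.det = 1)
    (r : ℝ) (hr : r ∈ Set.Ioo (0 : ℝ) (1/4))
    (hΛ : ∀ v ∈ lat g, (∀ i, v i ∈ Set.Ioo (r - 1) (1 - r)) → v = 0)
    (U : Set (Fin d → ℝ)) (hU : MeasurableSet U)
    (hdisj : ∀ x ∈ U, ∀ v ∈ lat g, ¬ (∀ i, x i - v i ∈ Set.Ioo ((r - 1)/2) ((1 - r)/2)))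
    (htrans : ∃ c : Fin d → ℝ, ∀ x ∈ U, ∀ i, x i - c i ∈ Set.Ioo (0 : ℝ) (3/4)) :
    volume U < ENNReal.ofReal (d * r) := by
  obtain ⟨hr₀, hr₁⟩ := hr
  obtain ⟨c, hc⟩ := htrans
  have hpack : volume U + ENNReal.ofReal ((1 - r) ^ d) ≤ 1 :=
    calc volume U + ENNReal.ofReal ((1 - r) ^ d) = volume (U ∪ halfCube d r) := by
          rw [measure_union (disjoint_halfCube hdisj) measurableSet_halfCube,
            volume_halfCube (by linarith)]
      _ ≤ ENNReal.ofReal |g.det| :=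
          volume_le_abs_det_of_isPackingSet g (by simp [hg])
            (hU.union measurableSet_halfCube).nullMeasurableSet
            (isPackingSet_union_halfCube hΛ hr₁ hdisj hc)
      _ = 1 := by simp [hg]
  have hU_le : volume U ≤ ENNReal.ofReal (1 - (1 - r) ^ d) := by
    rw [ENNReal.ofReal_sub _ (pow_nonneg (by linarith) _), ENNReal.ofReal_one]
    exact ENNReal.le_sub_of_add_le_right ENNReal.ofReal_ne_top hpack
  refine hU_le.trans_lt ((ENNReal.ofReal_lt_ofReal_iff (mul_pos (by positivity) hr₀)).mpr ?_)
  linarith [one_sub_mul_lt_one_sub_pow hr₀.ne' (by linarith) hd]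
end

section
/- Let d ≥ 2 and let g = (g_{ij}) ∈ SL_d(ℝ) and r ∈ (0, 1/8). Assume that g·ℤ^d contains no nonzero points of the open cube (r−1, 1−r)^d, and that ‖g − u‖ < 1/8 (supremum norm on matrix entries) for some upper triangular unipotent matrix u with all strictly-upper-triangular entries in (−1/2, 1/2]. Then for every 1 ≤ i ≤ d one has 1 − r ≤ g_{ii} ≤ 1 − r + 8^{d−1}·d·r. -/
/-!
The lower bound holds because the `i`-th column of `g` is a lattice vector whose off-diagonal
entries are smaller than `5/8`. For the upper bound, put on top of the half-open cube
`[0, 1 - r)^d` a box with `i`-th side `(1 - r, g i i)` and all other sides of length `1/8`, placed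
above the positive parts of the `i`-th column `w` of `g`. If `g i i` exceeded the bound, the union
would have volume `(1 - r)^d + (g i i - (1 - r)) 8^(1 - d) > 1` by Bernoulli's inequality, so by
Blichfeldt two of its points would differ by a nonzero lattice vector `v`. A difference within
one piece lies in the open cube `(r - 1, 1 - r)^d`; a difference `v` across the pieces lies in it,
or `v - w` does, and either is nonzero by its `i`-th coordinate.
-/

open Set

open MeasureTheory

theorem lat_eq_span_s2 {d : ℕ} (g : Matrix (Fin d) (Fin d) ℝ) :
    lat g = Submodule.span ℤ (range g.col) := by
  have key : ∀ m : Fin d → ℤ, ∑ j, m j • g.col j = g.mulVec fun j => (m j : ℝ) := fun m => by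
    ext k
    simp [Matrix.mulVec, dotProduct, mul_comm]
  ext v
  rw [SetLike.mem_coe, Submodule.mem_span_range_iff_exists_fun]
  exact ⟨fun ⟨m, hm⟩ => ⟨m, hm ▸ key m⟩, fun ⟨m, hm⟩ => ⟨m, hm ▸ key m⟩⟩

theorem col_mem_lat {d : ℕ} (g : Matrix (Fin d) (Fin d) ℝ) (i : Fin d) : g.col i ∈ lat g := by
  rw [lat_eq_span_s2]
  exact Submodule.subset_span (mem_range_self i)

theorem exists_ne_sub_mem_lat {d : ℕ} (g : Matrix (Fin d) (Fin d) ℝ) (hg : IsUnit g.det)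
    {A : Set (Fin d → ℝ)} (hA : NullMeasurableSet A) (hvol : ENNReal.ofReal |g.det| < volume A) :
    ∃ p ∈ A, ∃ q ∈ A, p ≠ q ∧ p - q ∈ lat g := by
  let b := basisOfLinearIndependentOfCardEqFinrank' g.col
    (Matrix.linearIndependent_cols_of_isUnit ((Matrix.isUnit_iff_isUnit_det g).mpr hg)) (by simp)
  have hb : ⇑b = g.col := coe_basisOfLinearIndependentOfCardEqFinrank' _ _ _
  have hF : volume (ZSpan.fundamentalDomain b) = ENNReal.ofReal |g.det| := by
    rw [ZSpan.volume_fundamentalDomain, hb, Matrix.col_eq_transpose]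
    simp
  have : Countable (Submodule.span ℤ (range b)).toAddSubgroup :=
    inferInstanceAs (Countable (Submodule.span ℤ (range b)))
  obtain ⟨x, y, hxy, hxyA⟩ :=
    exists_pair_mem_lattice_not_disjoint_vadd (ZSpan.isAddFundamentalDomain' b volume) hA
      (hF ▸ hvol)
  obtain ⟨_, ⟨p, hp, rfl⟩, ⟨q, hq, hpq⟩⟩ := not_disjoint_iff.mp hxyA
  have hsub : q - p = ↑(x - y) := by
    change (y : Fin d → ℝ) + q = x + p at hpq
    rw [AddSubgroup.coe_sub, sub_eq_sub_iff_add_eq_add, add_comm, hpq, add_comm]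
  refine ⟨q, hq, p, hp, fun h => hxy ?_, ?_⟩
  · rwa [h, sub_self, eq_comm, ZeroMemClass.coe_eq_zero, sub_eq_zero] at hsub
  · rw [hsub, lat_eq_span_s2, ← hb]
    exact (x - y).2

def AvoidsCube {ι : Type*} (L : Set (ι → ℝ)) (r : ℝ) : Prop :=
  ∀ v ∈ L, (∀ j, v j ∈ Ioo (r - 1) (1 - r)) → v = 0

theorem one_sub_le_of_avoidsCube {ι : Type*} {L : Set (ι → ℝ)} {r : ℝ} (hL : AvoidsCube L r)
    {w : ι → ℝ} (hw : w ∈ L) {i : ι} (hwi : 0 < w i) (hwj : ∀ j ≠ i, |w j| < 1 - r) :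
    1 - r ≤ w i := by
  by_contra! hlt
  have hw0 : w = 0 := hL w hw fun j => by
    by_cases hj : j = i
    · subst hj
      exact ⟨by linarith, hlt⟩
    · obtain ⟨h1, h2⟩ := abs_lt.mp (hwj j hj)
      exact ⟨by linarith, h2⟩
  simp [hw0] at hwi

section Boxes

variable {ι : Type*}

def lowerBox (r : ℝ) : Set (ι → ℝ) :=
  univ.pi fun _ => Ico 0 (1 - r)

def upperBox [DecidableEq ι] (w : ι → ℝ) (i : ι) (r δ : ℝ) : Set (ι → ℝ) :=
  univ.pi fun j => if j = i then Ioo (1 - r) (w i) else Ioo (max (w j) 0) (max (w j) 0 + δ)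

variable {w p q : ι → ℝ} {i : ι} {r δ : ℝ}

theorem mem_lowerBox : p ∈ lowerBox r ↔ ∀ j, p j ∈ Ico 0 (1 - r) := by
  simp [lowerBox]

theorem mem_upperBox [DecidableEq ι] : p ∈ upperBox w i r δ ↔
    p i ∈ Ioo (1 - r) (w i) ∧ ∀ j ≠ i, p j ∈ Ioo (max (w j) 0) (max (w j) 0 + δ) := by
  simp only [upperBox, mem_univ_pi]
  refine ⟨fun h => ⟨by simpa using h i, fun j hj => by simpa [hj] using h j⟩, fun h j => ?_⟩
  split_ifs with hj
  · exact hj ▸ h.1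
  · exact h.2 j hj

theorem measurableSet_lowerBox [Countable ι] : MeasurableSet (lowerBox r : Set (ι → ℝ)) :=
  MeasurableSet.univ_pi fun _ => measurableSet_Ico

theorem measurableSet_upperBox [Countable ι] [DecidableEq ι] : MeasurableSet (upperBox w i r δ) :=
  MeasurableSet.univ_pi fun _ => by split_ifs <;> exact measurableSet_Ioo

theorem volume_lowerBox [Fintype ι] (hr : r ≤ 1) :
    volume (lowerBox r : Set (ι → ℝ)) = ENNReal.ofReal ((1 - r) ^ Fintype.card ι) := by
  rw [lowerBox, volume_pi_pi]
  simp [Finset.prod_const, ENNReal.ofReal_pow (sub_nonneg.mpr hr)]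

theorem volume_upperBox [Fintype ι] [DecidableEq ι] (hw : 1 - r ≤ w i) (hδ : 0 ≤ δ) :
    volume (upperBox w i r δ) = ENNReal.ofReal ((w i - (1 - r)) * δ ^ (Fintype.card ι - 1)) := by
  rw [upperBox, volume_pi_pi, ← Finset.mul_prod_erase _ _ (Finset.mem_univ i), if_pos rfl,
    Finset.prod_congr rfl fun j hj => by rw [if_neg (Finset.ne_of_mem_erase hj)]]
  simp [Finset.card_erase_of_mem, ENNReal.ofReal_mul (sub_nonneg.mpr hw), ENNReal.ofReal_pow hδ]

theorem disjoint_lowerBox_upperBox [DecidableEq ι] : Disjoint (lowerBox r) (upperBox w i r δ) :=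
  disjoint_left.mpr fun _ hQ hS => by
    linarith [(mem_lowerBox.mp hQ i).2, (mem_upperBox.mp hS).1.1]

theorem volume_lowerBox_union_upperBox [Fintype ι] [DecidableEq ι] (hr : r ≤ 1)
    (hw : 1 - r ≤ w i) (hδ : 0 ≤ δ) :
    volume (lowerBox r ∪ upperBox w i r δ) = ENNReal.ofReal
      ((1 - r) ^ Fintype.card ι + (w i - (1 - r)) * δ ^ (Fintype.card ι - 1)) := by
  rw [measure_union disjoint_lowerBox_upperBox measurableSet_upperBox, volume_lowerBox hr,
    volume_upperBox hw hδ, ← ENNReal.ofReal_add (by bound) (by bound)]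

theorem sub_mem_cube_of_mem_lowerBox (hp : p ∈ lowerBox r) (hq : q ∈ lowerBox r) (j : ι) :
    (p - q) j ∈ Ioo (r - 1) (1 - r) := by
  have := mem_lowerBox.mp hp j
  have := mem_lowerBox.mp hq j
  simp only [Pi.sub_apply, mem_Ioo, mem_Ico] at *
  constructor <;> linarith

theorem sub_mem_cube_of_mem_upperBox [DecidableEq ι] (hwi : w i < 2 * (1 - r)) (hδ : δ ≤ 1 - r)
    (hp : p ∈ upperBox w i r δ) (hq : q ∈ upperBox w i r δ) (j : ι) :
    (p - q) j ∈ Ioo (r - 1) (1 - r) := by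
  obtain ⟨⟨hpi, hpi'⟩, hpj⟩ := mem_upperBox.mp hp
  obtain ⟨⟨hqi, hqi'⟩, hqj⟩ := mem_upperBox.mp hq
  simp only [Pi.sub_apply, mem_Ioo]
  by_cases hj : j = i
  · subst hj
    constructor <;> linarith
  · obtain ⟨_, _⟩ := hpj j hj
    obtain ⟨_, _⟩ := hqj j hj
    constructor <;> linarith

theorem sub_mem_cube_of_mem_upperBox_of_mem_lowerBox [DecidableEq ι]
    (hwj : ∀ j ≠ i, |w j| + δ ≤ 1 - r) (hp : p ∈ upperBox w i r δ) (hq : q ∈ lowerBox r)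
    (hi : (p - q) i < 1 - r) (j : ι) : (p - q) j ∈ Ioo (r - 1) (1 - r) := by
  obtain ⟨⟨hpi, -⟩, hpj⟩ := mem_upperBox.mp hp
  obtain ⟨hqi, -⟩ := mem_lowerBox.mp hq i
  obtain ⟨hqj, hqj'⟩ := mem_lowerBox.mp hq j
  rw [Pi.sub_apply] at hi ⊢
  by_cases hj : j = i
  · subst hj
    constructor <;> linarith
  · obtain ⟨hpj, hpj'⟩ := hpj j hj
    have := hwj j hj
    constructor <;> linarith [le_max_right (w j) 0, max_le (le_abs_self (w j)) (abs_nonneg (w j))]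

theorem sub_sub_mem_cube_of_mem_upperBox_of_mem_lowerBox [DecidableEq ι]
    (hwi : w i < 2 * (1 - r)) (hwj : ∀ j ≠ i, |w j| + δ ≤ 1 - r) (hp : p ∈ upperBox w i r δ)
    (hq : q ∈ lowerBox r) (hi : 1 - r ≤ (p - q) i) (j : ι) :
    (p - q - w) j ∈ Ioo (r - 1) (1 - r) := by
  obtain ⟨⟨-, hpi⟩, hpj⟩ := mem_upperBox.mp hp
  obtain ⟨hqi, -⟩ := mem_lowerBox.mp hq i
  obtain ⟨hqj, hqj'⟩ := mem_lowerBox.mp hq j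
  rw [Pi.sub_apply] at hi
  rw [Pi.sub_apply, Pi.sub_apply]
  by_cases hj : j = i
  · subst hj
    constructor <;> linarith
  · obtain ⟨hpj, hpj'⟩ := hpj j hj
    have := hwj j hj
    have : max (w j) 0 - w j ≤ |w j| := by
      cases max_cases (w j) 0 <;> linarith [neg_abs_le (w j), abs_nonneg (w j)]
    constructor <;> linarith [le_max_left (w j) 0]

theorem not_sub_mem_of_mem_upperBox_of_mem_lowerBox [DecidableEq ι] {L : AddSubgroup (ι → ℝ)}
    (hL : AvoidsCube (L : Set (ι → ℝ)) r) (hw : w ∈ L) (hwi : w i < 2 * (1 - r))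
    (hwj : ∀ j ≠ i, |w j| + δ ≤ 1 - r) (hp : p ∈ upperBox w i r δ) (hq : q ∈ lowerBox r) :
    p - q ∉ L := by
  intro hv
  obtain ⟨⟨hpi, hpi'⟩, -⟩ := mem_upperBox.mp hp
  obtain ⟨hqi, hqi'⟩ := mem_lowerBox.mp hq i
  rcases lt_or_ge ((p - q) i) (1 - r) with hsmall | hlarge
  · have h0 := congrFun (hL _ hv
      (sub_mem_cube_of_mem_upperBox_of_mem_lowerBox hwj hp hq hsmall)) i
    simp only [Pi.sub_apply, Pi.zero_apply] at h0
    linarith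
  · have h0 := congrFun (hL _ (L.sub_mem hv hw)
      (sub_sub_mem_cube_of_mem_upperBox_of_mem_lowerBox hwi hwj hp hq hlarge)) i
    simp only [Pi.sub_apply, Pi.zero_apply] at h0
    linarith

theorem eq_of_sub_mem_of_mem_boxes [DecidableEq ι] {L : AddSubgroup (ι → ℝ)}
    (hL : AvoidsCube (L : Set (ι → ℝ)) r) (hw : w ∈ L) (hwi : w i < 2 * (1 - r))
    (hwj : ∀ j ≠ i, |w j| + δ ≤ 1 - r) (hδ : δ ≤ 1 - r)
    (hp : p ∈ lowerBox r ∪ upperBox w i r δ) (hq : q ∈ lowerBox r ∪ upperBox w i r δ)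
    (hpq : p - q ∈ L) : p = q := by
  rcases hp with hp | hp <;> rcases hq with hq | hq
  · exact sub_eq_zero.mp (hL _ hpq (sub_mem_cube_of_mem_lowerBox hp hq))
  · rw [← neg_sub, L.neg_mem_iff] at hpq
    exact (not_sub_mem_of_mem_upperBox_of_mem_lowerBox hL hw hwi hwj hq hp hpq).elim
  · exact (not_sub_mem_of_mem_upperBox_of_mem_lowerBox hL hw hwi hwj hp hq hpq).elim
  · exact sub_eq_zero.mp (hL _ hpq (sub_mem_cube_of_mem_upperBox hwi hδ hp hq))

end Boxes

theorem one_lt_one_sub_pow_add_mul {n : ℕ} {r x : ℝ} (hr : r ≤ 2)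
    (hx : 8 ^ (n - 1) * n * r < x) :
    1 < (1 - r) ^ n + x * (1 / 8) ^ (n - 1) := by
  have bernoulli : 1 - n * r ≤ (1 - r) ^ n := by
    simpa [sub_eq_add_neg] using one_add_mul_le_pow (a := -r) (by linarith) n
  have h8 : (8 : ℝ) ^ (n - 1) * (1 / 8) ^ (n - 1) = 1 := by rw [← mul_pow]; norm_num
  have : n * r < x * (1 / 8) ^ (n - 1) := by
    calc (n : ℝ) * r = 8 ^ (n - 1) * n * r * (1 / 8) ^ (n - 1) := by
          linear_combination (-(n * r)) * h8
      _ < x * (1 / 8) ^ (n - 1) := by gcongr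
  linarith

theorem diag_le_of_avoidsCube {d : ℕ} (g : Matrix (Fin d) (Fin d) ℝ) (hg : g.det = 1) {r : ℝ}
    (hr0 : 0 ≤ r) (hr : r ≤ 7 / 8) (hlat : AvoidsCube (lat g) r) (i : Fin d)
    (hgi : g i i < 2 * (1 - r)) (hgj : ∀ j ≠ i, |g j i| + 1 / 8 ≤ 1 - r) :
    g i i ≤ 1 - r + 8 ^ (d - 1) * d * r := by
  by_contra! hbig
  have hgi' : 1 - r ≤ g.col i i := by
    change 1 - r ≤ g i i
    nlinarith [show (0 : ℝ) ≤ 8 ^ (d - 1) * d by positivity]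
  have hvol : ENNReal.ofReal |g.det| < volume (lowerBox r ∪ upperBox (g.col i) i r (1 / 8)) := by
    rw [volume_lowerBox_union_upperBox (by linarith) hgi' (by norm_num), hg, abs_one,
      Fintype.card_fin]
    exact ENNReal.ofReal_lt_ofReal_iff_of_nonneg zero_le_one |>.mpr
      (one_lt_one_sub_pow_add_mul (by linarith) (by change _ < g i i - _; linarith))
  obtain ⟨p, hp, q, hq, hne, hpq⟩ := exists_ne_sub_mem_lat g (by simp [hg])
    (measurableSet_lowerBox.union measurableSet_upperBox).nullMeasurableSet hvol
  rw [lat_eq_span_s2] at hpq hlat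
  exact hne (eq_of_sub_mem_of_mem_boxes (L := (Submodule.span ℤ (range g.col)).toAddSubgroup)
    hlat (Submodule.subset_span (mem_range_self i)) hgi hgj (by linarith) hp hq hpq)

theorem diagonal_entries_bound_general
    {d : ℕ} (g u : Matrix (Fin d) (Fin d) ℝ) (hg : g.det = 1)
    (r : ℝ) (hr : r ∈ Set.Ioo (0 : ℝ) (1/8))
    (hlat : ∀ v ∈ lat g, (∀ i, v i ∈ Set.Ioo (r - 1) (1 - r)) → v = 0)
    (hu1 : ∀ i, u i i = 1)
    (hu0 : ∀ i j : Fin d, j < i → u i j = 0)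
    (hu2 : ∀ i j : Fin d, i < j → u i j ∈ Set.Ioc (-(1/2) : ℝ) (1/2))
    (hnear : ∀ i j, |g i j - u i j| < 1/8) :
    ∀ i, 1 - r ≤ g i i ∧ g i i ≤ 1 - r + 8 ^ (d - 1) * d * r := by
  obtain ⟨hr0, hr8⟩ := hr
  intro i
  have hdiag := abs_lt.mp (hu1 i ▸ hnear i i)
  have hoff : ∀ j ≠ i, |g j i| < 5 / 8 := fun j hj => by
    have hu : |u j i| ≤ 1 / 2 := by
      rcases hj.lt_or_gt with h | h
      · obtain ⟨h1, h2⟩ := hu2 j i h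
        exact abs_le.mpr ⟨h1.le, h2⟩
      · rw [hu0 j i h]
        norm_num
    linarith [abs_sub_abs_le_abs_sub (g j i) (u j i), hnear j i]
  exact ⟨one_sub_le_of_avoidsCube hlat (col_mem_lat g i) (by rw [Matrix.col_apply]; linarith)
      fun j hj => (hoff j hj).trans (by linarith),
    diag_le_of_avoidsCube g hg hr0.le (by linarith) hlat i (by linarith)
      fun j hj => by linarith [hoff j hj]⟩

theorem diagonal_entries_bound
    {d : ℕ} (hd : 2 ≤ d) (g u : Matrix (Fin d) (Fin d) ℝ) (hg : g.det = 1)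
    (r : ℝ) (hr : r ∈ Set.Ioo (0 : ℝ) (1/8))
    (hlat : ∀ v ∈ lat g, (∀ i, v i ∈ Set.Ioo (r - 1) (1 - r)) → v = 0)
    (hu1 : ∀ i, u i i = 1)
    (hu0 : ∀ i j : Fin d, j < i → u i j = 0)
    (hu2 : ∀ i j : Fin d, i < j → u i j ∈ Set.Ioc (-(1/2) : ℝ) (1/2))
    (hnear : ∀ i j, |g i j - u i j| < 1/8) :
    ∀ i, 1 - r ≤ g i i ∧ g i i ≤ 1 - r + 8 ^ (d - 1) * d * r :=
  diagonal_entries_bound_general g u hg r hr hlat hu1 hu0 hu2 hnear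
end

section
/- Let d ≥ 2. There exist constants a ∈ (0,1) and A > 1 depending only on d such that: for every upper triangular unipotent matrix u ∈ SL_d(ℝ) and every ε ∈ (0, a), there exist an upper triangular unipotent integer matrix γ ∈ SL_d(ℤ) and a real number B ∈ [1, A] such that all strictly-upper-triangular entries of u·γ lie in the interval (−1/2 + 4Bε, 1/2 + Bε]. Moreover one can take A = 4^{2^d} and a = 2^{−(3+2^{d+1})}. -/
/-!
Write `I_B = (-1/2 + 4Bε, 1/2 + Bε]` and try the scales `B = 4^m`, `0 ≤ m ≤ 2^d`. Reducing a
real number `x` modulo `1` into `I_B` only fails when `x mod 1` falls into the gap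
`(1/2 + Bε, 1/2 + 4Bε]`, and these gaps are disjoint for distinct scales; otherwise one of two
consecutive integers (independent of the scale) does the job. The columns of `γ` are independent,
and column `j` is chosen from the bottom row up, and every row can cost at most one scale in each of the at most `2^j` branches
created so far, so column `j` rules out at most `2^j - 1` scales. In total fewer than `2^d + 1`
scales are ruled out, and any remaining scale gives `γ`.
-/

open Finset Matrix

def shiftedIoc (ε B : ℝ) : Set ℝ := Set.Ioc (-(1 / 2) + 4 * B * ε) (1 / 2 + B * ε)

lemma Monotone.subsingleton_setOf_lt_and_le_succ {α : Type*} [Preorder α] {f : ℕ → α}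
    (hf : Monotone f) (y : α) :
    {m | f m < y ∧ y ≤ f (m + 1)}.Subsingleton := by
  have lt_false {m₁ m₂ : ℕ} (hm : m₁ < m₂) (h₁ : y ≤ f (m₁ + 1)) (h₂ : f m₂ < y) : False :=
    (h₁.trans (hf hm)).not_gt h₂
  intro m₁ h₁ m₂ h₂
  rcases lt_trichotomy m₁ m₂ with hlt | heq | hgt
  exacts [(lt_false hlt h₁.2 h₂.1).elim, heq, (lt_false hgt h₂.2 h₁.1).elim]

lemma exists_int_forall_ne_add_mem_shiftedIoc (x : ℝ) {ε : ℝ} (hε : 0 ≤ ε) :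
    ∃ (n : ℤ) (b : ℕ), ∀ m : ℕ, 4 ^ (m + 1) * ε ≤ 1 → m ≠ b →
      x + n ∈ shiftedIoc ε (4 ^ m) ∨ x + ↑(n + 1) ∈ shiftedIoc ε (4 ^ m) := by
  set r := x - ⌈x - 1 / 2⌉
  have hr_gt : -(1 / 2) < r := by linarith [Int.ceil_lt_add_one (x - 1 / 2)]
  have hr_le : r ≤ 1 / 2 := by linarith [Int.le_ceil (x - 1 / 2)]
  -- the scale `4^m` fails exactly when `r + 1/2 ∈ (4^m ε, 4^(m+1) ε]`
  have hgaps := Monotone.subsingleton_setOf_lt_and_le_succ (f := fun m => 4 ^ m * ε)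
    (fun _ _ h => mul_le_mul_of_nonneg_right (pow_le_pow_right₀ (by norm_num) h) hε) (r + 1 / 2)
  obtain ⟨b, hb⟩ : ∃ b, ∀ m, 4 ^ m * ε < r + 1 / 2 → r + 1 / 2 ≤ 4 ^ (m + 1) * ε → m = b := by
    rcases hgaps.eq_empty_or_singleton with h | ⟨b, h⟩
    · exact ⟨0, fun m h₁ h₂ => (h.subset ⟨h₁, h₂⟩).elim⟩
    · exact ⟨b, fun m h₁ h₂ => h.subset ⟨h₁, h₂⟩⟩
  refine ⟨-⌈x - 1 / 2⌉, b, fun m hm hmb => ?_⟩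
  have hpow : (4 : ℝ) ^ (m + 1) * ε = 4 * (4 ^ m * ε) := by ring
  have hscale : 0 ≤ 4 ^ m * ε := by positivity
  rw [show x + ((-⌈x - 1 / 2⌉ : ℤ) : ℝ) = r by push_cast; ring,
    show x + ((-⌈x - 1 / 2⌉ + 1 : ℤ) : ℝ) = r + 1 by push_cast; ring]
  simp only [shiftedIoc, Set.mem_Ioc]
  by_cases hr : -(1 / 2) + 4 * 4 ^ m * ε < r
  · left; constructor <;> linarith
  · have hr' : r + 1 / 2 ≤ 4 ^ m * ε := by
      by_contra h
      exact hmb (hb m (not_le.mp h) (by linarith))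
    right; constructor <;> linarith

lemma Matrix.BlockTriangular.mulVec_apply_congr {n R : Type*} [Fintype n] [LinearOrder n]
    [NonUnitalNonAssocSemiring R] {u : Matrix n n R} (hu : u.BlockTriangular id) {v w : n → R}
    {p : n} (h : ∀ k, p ≤ k → v k = w k) : (u *ᵥ v) p = (u *ᵥ w) p := by
  refine Finset.sum_congr rfl fun k _ => ?_
  rcases le_or_gt p k with hk | hk
  · rw [h k hk]
  · simp [hu hk]

def ColumnReducible {d : ℕ} (u : Matrix (Fin d) (Fin d) ℝ) (ε B : ℝ) (h : ℕ) (v₀ : Fin d → ℤ) :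
    Prop :=
  ∃ v : Fin d → ℤ, (∀ k : Fin d, h ≤ k → v k = v₀ k) ∧
    ∀ i : Fin d, i < h → (u *ᵥ fun k => (v k : ℝ)) i ∈ shiftedIoc ε B

lemma columnReducible_succ {d : ℕ} {u : Matrix (Fin d) (Fin d) ℝ} (hu1 : ∀ i, u i i = 1)
    (hu0 : u.BlockTriangular id) {ε B : ℝ} {h : ℕ} (hh : h < d) {v₀ : Fin d → ℤ} {c : ℤ}
    (hc : (u *ᵥ fun k => (v₀ k : ℝ)) ⟨h, hh⟩ + c ∈ shiftedIoc ε B)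
    (hred : ColumnReducible u ε B h (v₀ + Pi.single ⟨h, hh⟩ c)) :
    ColumnReducible u ε B (h + 1) v₀ := by
  obtain ⟨v, hv_tail, hv_mem⟩ := hred
  refine ⟨v, fun k hk => ?_, fun i hi => ?_⟩
  · have hkh : k ≠ ⟨h, hh⟩ := fun e => by simp [e] at hk
    simp [hv_tail k (by omega), hkh]
  · rcases Nat.lt_succ_iff_lt_or_eq.mp hi with hi | hi
    · exact hv_mem i hi
    · obtain rfl : i = ⟨h, hh⟩ := Fin.ext hi
      rw [hu0.mulVec_apply_congr fun k hk => congrArg _ (hv_tail k hk)]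
      simpa [Matrix.mulVec, dotProduct, mul_add, Finset.sum_add_distrib, Pi.single_apply, hu1]
        using hc

open scoped Classical in
lemma card_filter_not_columnReducible_le {d : ℕ} {u : Matrix (Fin d) (Fin d) ℝ}
    (hu1 : ∀ i, u i i = 1) (hu0 : u.BlockTriangular id) {ε : ℝ} (hε : 0 ≤ ε) {S : Finset ℕ}
    (hS : ∀ m ∈ S, 4 ^ (m + 1) * ε ≤ 1) {h : ℕ} (hh : h ≤ d) (v₀ : Fin d → ℤ) :
    #{m ∈ S | ¬ ColumnReducible u ε (4 ^ m) h v₀} ≤ 2 ^ h - 1 := by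
  induction h generalizing v₀ with
  | zero =>
    simp only [pow_zero, tsub_self, Nat.le_zero, card_eq_zero, filter_eq_empty_iff, not_not]
    exact fun _ _ => ⟨v₀, fun _ _ => rfl, fun i hi => absurd hi (Nat.not_lt_zero _)⟩
  | succ h ih =>
    have hh' : h < d := hh
    obtain ⟨n, b, hnb⟩ :=
      exists_int_forall_ne_add_mem_shiftedIoc ((u *ᵥ fun k => (v₀ k : ℝ)) ⟨h, hh'⟩) hε
    let bad (c : ℤ) := {m ∈ S | ¬ ColumnReducible u ε (4 ^ m) h (v₀ + Pi.single ⟨h, hh'⟩ c)}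
    have hsub : {m ∈ S | ¬ ColumnReducible u ε (4 ^ m) (h + 1) v₀} ⊆
        insert b (bad n ∪ bad (n + 1)) := by
      intro m hm
      obtain ⟨hmS, hm⟩ := mem_filter.mp hm
      rcases eq_or_ne m b with rfl | hmb
      · exact mem_insert_self _ _
      refine mem_insert_of_mem (mem_union.mpr ?_)
      have mem_bad {c : ℤ} (hc : (u *ᵥ fun k => (v₀ k : ℝ)) ⟨h, hh'⟩ + c ∈ shiftedIoc ε (4 ^ m)) :
          m ∈ bad c :=
        mem_filter.mpr ⟨hmS, fun hred => hm (columnReducible_succ hu1 hu0 hh' hc hred)⟩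
      exact (hnb m (hS m hmS) hmb).imp mem_bad mem_bad
    have h₁ : #(bad n) ≤ 2 ^ h - 1 := ih hh'.le _
    have h₂ : #(bad (n + 1)) ≤ 2 ^ h - 1 := ih hh'.le _
    calc _ ≤ #(insert b (bad n ∪ bad (n + 1))) := card_le_card hsub
      _ ≤ #(bad n ∪ bad (n + 1)) + 1 := card_insert_le _ _
      _ ≤ #(bad n) + #(bad (n + 1)) + 1 := by grw [Finset.card_union_le]
      _ ≤ 2 ^ (h + 1) - 1 := by rw [pow_succ]; have := Nat.one_le_two_pow (n := h); omega

lemma exists_forall_columnReducible {d : ℕ} {u : Matrix (Fin d) (Fin d) ℝ}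
    (hu1 : ∀ i, u i i = 1) (hu0 : u.BlockTriangular id) {ε : ℝ} (hε : 0 ≤ ε)
    (hε₁ : 4 ^ (2 ^ d + 1) * ε ≤ 1) :
    ∃ m ≤ 2 ^ d, ∀ j : Fin d, ColumnReducible u ε (4 ^ m) j (Pi.single j 1) := by
  classical
  let S := range (2 ^ d + 1)
  have hS : ∀ m ∈ S, 4 ^ (m + 1) * ε ≤ 1 := fun m hm => by
    have : m ≤ 2 ^ d := Nat.lt_succ_iff.mp (mem_range.mp hm)
    grw [← hε₁, this]
    norm_num
  let bad (j : Fin d) := {m ∈ S | ¬ ColumnReducible u ε (4 ^ m) j (Pi.single j 1)}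
  have hcard : #(univ.biUnion bad) < #S := calc
    #(univ.biUnion bad) ≤ ∑ j : Fin d, #(bad j) := card_biUnion_le
    _ ≤ ∑ j : Fin d, 2 ^ (j : ℕ) := sum_le_sum fun j _ =>
      (card_filter_not_columnReducible_le hu1 hu0 hε hS j.is_lt.le _).trans (Nat.sub_le _ _)
    _ = ∑ k ∈ range d, 2 ^ k := Fin.sum_univ_eq_sum_range (2 ^ ·) d
    _ < 2 ^ d := Nat.geomSum_lt le_rfl fun k hk => mem_range.mp hk
    _ < #S := by simp [S]
  obtain ⟨m, hmS, hm⟩ := exists_mem_notMem_of_card_lt_card hcard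
  refine ⟨m, Nat.lt_succ_iff.mp (mem_range.mp hmS), fun j => ?_⟩
  by_contra hj
  exact hm (mem_biUnion.mpr ⟨j, mem_univ _, mem_filter.mpr ⟨hmS, hj⟩⟩)

lemma exists_unipotent_of_forall_columnReducible {d : ℕ} {u : Matrix (Fin d) (Fin d) ℝ} {ε B : ℝ}
    (hred : ∀ j : Fin d, ColumnReducible u ε B j (Pi.single j 1)) :
    ∃ γ : Matrix (Fin d) (Fin d) ℤ, (∀ i, γ i i = 1) ∧ (∀ i j : Fin d, j < i → γ i j = 0) ∧
      ∀ i j : Fin d, i < j → (u * γ.map (fun k : ℤ => (k : ℝ))) i j ∈ shiftedIoc ε B := by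
  choose v hv_tail hv_mem using hred
  refine ⟨of fun i j => v j i, fun i => ?_, fun i j hji => ?_, fun i j hij => hv_mem j i hij⟩
  · simp [hv_tail i i le_rfl]
  · simp [hv_tail j i (Fin.le_def.mp hji.le), hji.ne']

theorem unipotent_representative_in_shifted_domain_general
    {d : ℕ}
    (u : Matrix (Fin d) (Fin d) ℝ)
    (hu1 : ∀ i, u i i = 1)
    (hu0 : ∀ i j : Fin d, j < i → u i j = 0)
    (ε : ℝ) (hε : 0 < ε) (hεa : ε < ((2 : ℝ) ^ (3 + 2 ^ (d + 1)))⁻¹) :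
    ∃ γ : Matrix (Fin d) (Fin d) ℤ,
      (∀ i, γ i i = 1) ∧ (∀ i j : Fin d, j < i → γ i j = 0) ∧
      ∃ B : ℝ, B ∈ Set.Icc (1 : ℝ) ((4 : ℝ) ^ (2 ^ d)) ∧
        ∀ i j : Fin d, i < j →
          (u * γ.map (fun k : ℤ => (k : ℝ))) i j ∈
            Set.Ioc (-(1/2) + 4 * B * ε) (1/2 + B * ε) := by
  have h4 : (4 : ℝ) ^ (2 ^ d + 1) ≤ 2 ^ (3 + 2 ^ (d + 1)) := by
    rw [show (4 : ℝ) = 2 ^ 2 by norm_num, ← pow_mul]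
    exact pow_le_pow_right₀ (by norm_num) (by rw [pow_succ]; omega)
  have hε₁ : 4 ^ (2 ^ d + 1) * ε ≤ 1 := calc
    _ ≤ (2 : ℝ) ^ (3 + 2 ^ (d + 1)) * (2 ^ (3 + 2 ^ (d + 1)))⁻¹ := by gcongr
    _ = 1 := mul_inv_cancel₀ (by positivity)
  obtain ⟨m, hm, hred⟩ := exists_forall_columnReducible hu1 hu0 hε.le hε₁
  obtain ⟨γ, hγ1, hγ0, hγu⟩ := exists_unipotent_of_forall_columnReducible hred
  exact ⟨γ, hγ1, hγ0, 4 ^ m, ⟨one_le_pow₀ (by norm_num), pow_le_pow_right₀ (by norm_num) hm⟩, hγu⟩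

theorem unipotent_representative_in_shifted_domain
    {d : ℕ} (hd : 2 ≤ d)
    (u : Matrix (Fin d) (Fin d) ℝ)
    (hu1 : ∀ i, u i i = 1)
    (hu0 : ∀ i j : Fin d, j < i → u i j = 0)
    (ε : ℝ) (hε : 0 < ε) (hεa : ε < ((2 : ℝ) ^ (3 + 2 ^ (d + 1)))⁻¹) :
    ∃ γ : Matrix (Fin d) (Fin d) ℤ,
      (∀ i, γ i i = 1) ∧ (∀ i j : Fin d, j < i → γ i j = 0) ∧
      ∃ B : ℝ, B ∈ Set.Icc (1 : ℝ) ((4 : ℝ) ^ (2 ^ d)) ∧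
        ∀ i j : Fin d, i < j →
          (u * γ.map (fun k : ℤ => (k : ℝ))) i j ∈
            Set.Ioc (-(1/2) + 4 * B * ε) (1/2 + B * ε) :=
  unipotent_representative_in_shifted_domain_general u hu1 hu0 ε hε hεa
end

section
/- Let m, n ∈ ℕ, d = m + n, t_0 > 0, and let ψ: [t_0, ∞) → (0, ∞) be a continuous decreasing function such that t ↦ t·ψ(t) is increasing and ψ(t) < 1/t for all t ≥ t_0. Then there exists a unique continuous decreasing function r: [s_0, ∞) → (0, ∞), where s_0 = (m/d)·log t_0 − (n/d)·log ψ(t_0), such that the function s ↦ s + m·r(s) is increasing and ψ(e^{s − n·r(s)}) = e^{−s − m·r(s)} for all s ≥ s_0. -/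
/-!
Put `s(t) = (m/d) log t - (n/d) log ψ(t)` and `ρ(t) = -(1/d) log (t ψ(t))`. Since `log ψ` is
antitone, `s` is a continuous increasing bijection `[t₀, ∞) → [s₀, ∞)`, and `s - n ρ = log t`,
`s + m ρ = -log ψ(t)`. Hence `r = ρ ∘ s⁻¹` solves the functional equation, and it inherits its
properties from the monotonicity of `ψ` and of `t ψ(t)` and from `t ψ(t) < 1`. Conversely, any
solution `r` forces `s (e^{s - n r(s)}) = s`, so `e^{s - n r(s)} = s⁻¹(s)` by injectivity, which
determines `r(s)`.
-/

open Set Filter Function Real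

section InvFunOn

variable {α β : Type*} [LinearOrder α] [Nonempty α] [Preorder β] {f : α → β} {a : α}

theorem StrictMonoOn.strictMonoOn_invFunOn_Ici (hf : StrictMonoOn f (Ici a))
    (hsurj : SurjOn f (Ici a) (Ici (f a))) : StrictMonoOn (invFunOn f (Ici a)) (Ici (f a)) := by
  intro x hx y hy hxy
  rw [← hf.lt_iff_lt (hsurj.mapsTo_invFunOn hx) (hsurj.mapsTo_invFunOn hy),
    hsurj.rightInvOn_invFunOn hx, hsurj.rightInvOn_invFunOn hy]
  exact hxy

theorem StrictMonoOn.image_invFunOn_Ici (hf : StrictMonoOn f (Ici a))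
    (hsurj : SurjOn f (Ici a) (Ici (f a))) : invFunOn f (Ici a) '' Ici (f a) = Ici a := by
  refine (hsurj.mapsTo_invFunOn.image_subset).antisymm fun x hx => ?_
  exact ⟨f x, hf.monotoneOn self_mem_Ici hx hx, hf.injOn.leftInvOn_invFunOn hx⟩

end InvFunOn

theorem StrictMonoOn.continuousOn_of_image_Ici {α β : Type*} [LinearOrder α] [TopologicalSpace α]
    [OrderTopology α] [DenselyOrdered α] [LinearOrder β] [TopologicalSpace β] [OrderTopology β]
    {g : β → α} {a : α} {b : β}
    (hg : StrictMonoOn g (Ici b)) (himg : g '' Ici b = Ici a) : ContinuousOn g (Ici b) := by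
  have hab : a ≤ g b := (himg ▸ mem_image_of_mem g self_mem_Ici : g b ∈ Ici a)
  intro x hx
  rcases (show b ≤ x from hx).eq_or_lt with rfl | hbx
  · refine hg.continuousWithinAt_right_of_image_mem_nhdsWithin self_mem_nhdsWithin ?_
    rw [himg]
    exact mem_of_superset self_mem_nhdsWithin (Ici_subset_Ici.2 hab)
  · refine (hg.continuousAt_of_image_mem_nhds (Ici_mem_nhds hbx) ?_).continuousWithinAt
    rw [himg]
    exact Ici_mem_nhds (hab.trans_lt (hg self_mem_Ici hx hbx))

theorem ContinuousOn.le_apply_of_tendsto_atTop {α β : Type*} [ConditionallyCompleteLinearOrder α]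
    [TopologicalSpace α] [OrderTopology α] [DenselyOrdered α] [LinearOrder β] [TopologicalSpace β]
    [OrderClosedTopology β] {g : α → β} {a : α} {y : β}
    (hg : ContinuousOn g (Ici a)) (htop : Tendsto g atTop atTop)
    (hy : ∀ x ≥ a, g x = y → x = a) : y ≤ g a := by
  by_contra! hlt
  obtain ⟨x, hx, rfl⟩ := intermediate_value_Ici hg htop hlt.le
  exact hlt.ne (congrArg g (hy x hx rfl).symm)

namespace DaniCorrespondence

variable (m n : ℝ) (ψ : ℝ → ℝ)

/-- With `t = exp (s - n * r s)`, `time t` is `s` and `radius t` is `r s`; the latter is read off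
from `exp (-(m + n) * r s) = t * ψ t`. -/
noncomputable def time (t : ℝ) : ℝ := m / (m + n) * log t - n / (m + n) * log (ψ t)

noncomputable def radius (t : ℝ) : ℝ := -(1 / (m + n)) * log (t * ψ t)

def IsCorrespondent (s₀ : ℝ) (r : ℝ → ℝ) : Prop :=
  ContinuousOn r (Ici s₀) ∧ AntitoneOn r (Ici s₀) ∧ (∀ s ≥ s₀, 0 < r s) ∧
    MonotoneOn (fun s => s + m * r s) (Ici s₀) ∧
    ∀ s ≥ s₀, ψ (exp (s - n * r s)) = exp (-s - m * r s)

variable {m n ψ} {t₀ : ℝ}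

theorem time_sub_mul_radius (hmn : m + n ≠ 0) {t : ℝ} (ht : 0 < t) (hψ : 0 < ψ t) :
    time m n ψ t - n * radius m n ψ t = log t := by
  unfold time radius
  rw [log_mul ht.ne' hψ.ne']
  field_simp
  ring

theorem time_add_mul_radius (hmn : m + n ≠ 0) {t : ℝ} (ht : 0 < t) (hψ : 0 < ψ t) :
    time m n ψ t + m * radius m n ψ t = -log (ψ t) := by
  unfold time radius
  rw [log_mul ht.ne' hψ.ne']
  field_simp
  ring

theorem time_exp_sub_mul (hmn : m + n ≠ 0) {s ρ : ℝ}
    (h : ψ (exp (s - n * ρ)) = exp (-s - m * ρ)) : time m n ψ (exp (s - n * ρ)) = s := by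
  unfold time
  rw [h, log_exp, log_exp]
  field_simp
  ring

theorem strictMonoOn_time (hm : 0 < m) (hn : 0 ≤ n) (ht₀ : 0 < t₀) (hψ : ∀ t ≥ t₀, 0 < ψ t)
    (hanti : AntitoneOn ψ (Ici t₀)) : StrictMonoOn (time m n ψ) (Ici t₀) := by
  intro t ht u hu htu
  have hlog : log t < log u := log_lt_log (ht₀.trans_le ht) htu
  have hlogψ : log (ψ u) ≤ log (ψ t) := log_le_log (hψ u hu) (hanti ht hu htu.le)
  have hmd : m / (m + n) * log t < m / (m + n) * log u := by gcongr
  have hnd : n / (m + n) * log (ψ u) ≤ n / (m + n) * log (ψ t) := by gcongr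
  unfold time
  linarith

theorem continuousOn_time (ht₀ : 0 < t₀) (hψ : ∀ t ≥ t₀, 0 < ψ t)
    (hcont : ContinuousOn ψ (Ici t₀)) : ContinuousOn (time m n ψ) (Ici t₀) :=
  (continuousOn_const.mul (continuousOn_log.mono fun _ ht => (ht₀.trans_le ht).ne')).sub
    (continuousOn_const.mul (hcont.log fun t ht => (hψ t ht).ne'))

theorem tendsto_time_atTop (hm : 0 < m) (hn : 0 ≤ n) (hψ : ∀ t ≥ t₀, 0 < ψ t)
    (hanti : AntitoneOn ψ (Ici t₀)) : Tendsto (time m n ψ) atTop atTop := by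
  have hlower : Tendsto (fun t => m / (m + n) * log t - n / (m + n) * log (ψ t₀)) atTop atTop :=
    tendsto_atTop_add_const_right _ _ (tendsto_log_atTop.const_mul_atTop (by positivity))
  refine tendsto_atTop_mono' _ ?_ hlower
  filter_upwards [eventually_ge_atTop t₀] with t ht
  have : log (ψ t) ≤ log (ψ t₀) := log_le_log (hψ t ht) (hanti self_mem_Ici ht ht)
  unfold time
  gcongr

theorem radius_pos (hmn : 0 < m + n) {t : ℝ} (ht : 0 < t) (hψ : 0 < ψ t) (hlt : ψ t < 1 / t) :
    0 < radius m n ψ t := by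
  have hprod : t * ψ t < 1 := (lt_div_iff₀' ht).1 hlt
  exact mul_pos_of_neg_of_neg (by simpa using hmn) (log_neg (mul_pos ht hψ) hprod)

theorem antitoneOn_radius (hmn : 0 < m + n) (ht₀ : 0 < t₀) (hψ : ∀ t ≥ t₀, 0 < ψ t)
    (hinc : MonotoneOn (fun t => t * ψ t) (Ici t₀)) : AntitoneOn (radius m n ψ) (Ici t₀) := by
  intro t ht u hu htu
  have hlog : log (t * ψ t) ≤ log (u * ψ u) :=
    log_le_log (mul_pos (ht₀.trans_le ht) (hψ t ht)) (hinc ht hu htu)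
  unfold radius
  exact mul_le_mul_of_nonpos_left hlog (by simpa using hmn.le)

theorem continuousOn_radius (ht₀ : 0 < t₀) (hψ : ∀ t ≥ t₀, 0 < ψ t)
    (hcont : ContinuousOn ψ (Ici t₀)) : ContinuousOn (radius m n ψ) (Ici t₀) :=
  continuousOn_const.mul ((continuousOn_id.mul hcont).log fun t ht =>
    (mul_pos (ht₀.trans_le ht) (hψ t ht)).ne')

theorem isCorrespondent_radius_comp_invFunOn (hm : 0 < m) (hn : 0 ≤ n) (ht₀ : 0 < t₀)
    (hψ : ∀ t ≥ t₀, 0 < ψ t) (hcont : ContinuousOn ψ (Ici t₀)) (hanti : AntitoneOn ψ (Ici t₀))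
    (hinc : MonotoneOn (fun t => t * ψ t) (Ici t₀)) (hlt : ∀ t ≥ t₀, ψ t < 1 / t) :
    IsCorrespondent m n ψ (time m n ψ t₀) (radius m n ψ ∘ invFunOn (time m n ψ) (Ici t₀)) := by
  have hmn : 0 < m + n := add_pos_of_pos_of_nonneg hm hn
  have hmono := strictMonoOn_time hm hn ht₀ hψ hanti
  have hsurj : SurjOn (time m n ψ) (Ici t₀) (Ici (time m n ψ t₀)) :=
    intermediate_value_Ici (continuousOn_time ht₀ hψ hcont) (tendsto_time_atTop hm hn hψ hanti)
  set T := invFunOn (time m n ψ) (Ici t₀)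
  have hT_maps : MapsTo T (Ici (time m n ψ t₀)) (Ici t₀) := hsurj.mapsTo_invFunOn
  have hT_mono : StrictMonoOn T (Ici (time m n ψ t₀)) := hmono.strictMonoOn_invFunOn_Ici hsurj
  have hT_time : ∀ s ∈ Ici (time m n ψ t₀), time m n ψ (T s) = s := hsurj.rightInvOn_invFunOn
  have hT_pos : ∀ s ≥ time m n ψ t₀, 0 < T s := fun s hs => ht₀.trans_le (hT_maps hs)
  have hψT_pos : ∀ s ≥ time m n ψ t₀, 0 < ψ (T s) := fun s hs => hψ _ (hT_maps hs)
  have hsub : ∀ s ≥ time m n ψ t₀, s - n * radius m n ψ (T s) = log (T s) := fun s hs => by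
    have h := time_sub_mul_radius hmn.ne' (hT_pos s hs) (hψT_pos s hs)
    rwa [hT_time s hs] at h
  have hadd : ∀ s ≥ time m n ψ t₀, s + m * radius m n ψ (T s) = -log (ψ (T s)) := fun s hs => by
    have h := time_add_mul_radius hmn.ne' (hT_pos s hs) (hψT_pos s hs)
    rwa [hT_time s hs] at h
  refine ⟨(continuousOn_radius ht₀ hψ hcont).comp
      (hT_mono.continuousOn_of_image_Ici (hmono.image_invFunOn_Ici hsurj)) hT_maps,
    (antitoneOn_radius hmn ht₀ hψ hinc).comp_MonotoneOn hT_mono.monotoneOn hT_maps,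
    fun s hs => radius_pos hmn (hT_pos s hs) (hψT_pos s hs) (hlt _ (hT_maps hs)),
    fun s hs u hu hsu => ?_, fun s hs => ?_⟩
  · simp only [comp_apply, hadd s hs, hadd u hu]
    exact neg_le_neg (log_le_log (hψT_pos u hu)
      (hanti (hT_maps hs) (hT_maps hu) (hT_mono.monotoneOn hs hu hsu)))
  · rw [comp_apply, hsub s hs, exp_log (hT_pos s hs), ← neg_add', hadd s hs, neg_neg,
      exp_log (hψT_pos s hs)]

/-- A priori `exp (s - n * r s)` might fall below `t₀`, where `ψ` is unconstrained; but it is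
continuous, tends to `+∞`, and can take the value `t₀` only at `s = time t₀`. -/
theorem IsCorrespondent.le_exp_sub_mul (hmn : m + n ≠ 0) (hn : 0 ≤ n) {r : ℝ → ℝ}
    (hr : IsCorrespondent m n ψ (time m n ψ t₀) r) {s : ℝ} (hs : time m n ψ t₀ ≤ s) :
    t₀ ≤ exp (s - n * r s) := by
  obtain ⟨hr_cont, hr_anti, -, -, hr_eq⟩ := hr
  set s₀ := time m n ψ t₀
  have hg_mono : MonotoneOn (fun s => exp (s - n * r s)) (Ici s₀) := fun s hs u hu hsu =>
    exp_le_exp.2 (sub_le_sub hsu (mul_le_mul_of_nonneg_left (hr_anti hs hu hsu) hn))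
  have hg_cont : ContinuousOn (fun s => exp (s - n * r s)) (Ici s₀) := by fun_prop
  have hg_top : Tendsto (fun s => exp (s - n * r s)) atTop atTop := by
    refine tendsto_exp_atTop.comp (tendsto_atTop_mono' _ ?_
      (tendsto_atTop_add_const_right _ (-(n * r s₀)) tendsto_id))
    filter_upwards [eventually_ge_atTop s₀] with u hu
    have := mul_le_mul_of_nonneg_left (hr_anti self_mem_Ici hu hu) hn
    simp only [id]
    linarith
  have hstart : t₀ ≤ exp (s₀ - n * r s₀) :=
    hg_cont.le_apply_of_tendsto_atTop hg_top fun σ hσ hσt₀ => by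
      rw [← time_exp_sub_mul hmn (hr_eq σ hσ), hσt₀]
  exact hstart.trans (hg_mono self_mem_Ici hs hs)

theorem IsCorrespondent.eqOn (hm : 0 < m) (hn : 0 < n) (ht₀ : 0 < t₀)
    (hψ : ∀ t ≥ t₀, 0 < ψ t) (hanti : AntitoneOn ψ (Ici t₀)) {r r' : ℝ → ℝ}
    (hr : IsCorrespondent m n ψ (time m n ψ t₀) r)
    (hr' : IsCorrespondent m n ψ (time m n ψ t₀) r') : EqOn r r' (Ici (time m n ψ t₀)) := by
  intro s hs
  have hmn : m + n ≠ 0 := (add_pos hm hn).ne'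
  have hexp : exp (s - n * r s) = exp (s - n * r' s) :=
    (strictMonoOn_time hm hn.le ht₀ hψ hanti).injOn
      (hr.le_exp_sub_mul hmn hn.le hs) (hr'.le_exp_sub_mul hmn hn.le hs)
      ((time_exp_sub_mul hmn (hr.2.2.2.2 s hs)).trans
        (time_exp_sub_mul hmn (hr'.2.2.2.2 s hs)).symm)
  have := exp_injective hexp
  exact mul_left_cancel₀ hn.ne' (by linarith)

end DaniCorrespondence

theorem dani_correspondence_existence_uniqueness
    (m n : ℕ) (hm : 0 < m) (hn : 0 < n) (d : ℕ) (hd : d = m + n)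
    (t₀ : ℝ) (ht₀ : 0 < t₀)
    (ψ : ℝ → ℝ)
    (hψpos : ∀ t ≥ t₀, 0 < ψ t)
    (hcont : ContinuousOn ψ (Set.Ici t₀))
    (hdec : AntitoneOn ψ (Set.Ici t₀))
    (hinc : MonotoneOn (fun t => t * ψ t) (Set.Ici t₀))
    (hlt : ∀ t ≥ t₀, ψ t < 1 / t)
    (s₀ : ℝ)
    (hs₀ : s₀ = ((m : ℝ) / d) * Real.log t₀ - ((n : ℝ) / d) * Real.log (ψ t₀)) :
    ∃ r : ℝ → ℝ,
      (ContinuousOn r (Set.Ici s₀) ∧ AntitoneOn r (Set.Ici s₀) ∧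
        (∀ s ≥ s₀, 0 < r s) ∧
        MonotoneOn (fun s => s + (m : ℝ) * r s) (Set.Ici s₀) ∧
        (∀ s ≥ s₀, ψ (Real.exp (s - (n : ℝ) * r s)) = Real.exp (-s - (m : ℝ) * r s))) ∧
      ∀ r' : ℝ → ℝ,
        (ContinuousOn r' (Set.Ici s₀) ∧ AntitoneOn r' (Set.Ici s₀) ∧
          (∀ s ≥ s₀, 0 < r' s) ∧
          MonotoneOn (fun s => s + (m : ℝ) * r' s) (Set.Ici s₀) ∧
          (∀ s ≥ s₀, ψ (Real.exp (s - (n : ℝ) * r' s)) = Real.exp (-s - (m : ℝ) * r' s))) →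
        ∀ s ≥ s₀, r' s = r s := by
  have hm' : (0 : ℝ) < m := Nat.cast_pos.2 hm
  have hn' : (0 : ℝ) < n := Nat.cast_pos.2 hn
  have hs₀ : s₀ = DaniCorrespondence.time m n ψ t₀ := by rw [hs₀, hd, Nat.cast_add]; rfl
  subst hs₀
  have hr := DaniCorrespondence.isCorrespondent_radius_comp_invFunOn hm' hn'.le ht₀ hψpos hcont
    hdec hinc hlt
  exact ⟨_, hr, fun r' hr' => DaniCorrespondence.IsCorrespondent.eqOn hm' hn' ht₀ hψpos hdec hr' hr⟩
end

section
/- Let d ≥ 2 and let S_{d−1} be the symmetric group on {1,…,d−1}. Suppose (b_{ij})_{1≤i,j≤d−1} is a real matrix with |b_{ij}| < 1 for all i, j, satisfying the ordering property |b_{i'j'}| ≤ |b_{ij}| whenever i' ≤ i, j' ≤ j, i' > j', i > j (off-diagonal below-diagonal comparisons), and |b_{ij}·b_{ji}| < r/d! for all 1 ≤ j < i ≤ d−1, for some r > 0. Then Σ_{σ ∈ S_{d−1}, σ ≠ id} ∏_{i=1}^{d−1} |b_{σ(i)i}| < r/d, and consequently |det(b_{ij}) − ∏_{i=1}^{d−1}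 b_{ii}| < r/d. -/
/-!
Every non-identity permutation `σ` moves a least point `m` and a greatest point `k`, with
`m < σ m ≤ k` and `m ≤ σ k < k`. Since all entries have modulus at most one, the product
`∏ |b (σ i) i|` is at most `|b (σ m) m| * |b (σ k) k|`, and the ordering property bounds this by
`|b k (σ k) * b (σ k) k| < r / d!`. Summing over the `(d - 1)! - 1` non-identity permutations
gives less than `(d - 1)! * r / d! = r / d`, and the Leibniz expansion of `det b - ∏ b i i`
is bounded by exactly this sum.
-/

open Finset Equiv
open scoped Nat

namespace Equiv.Perm

variable {n : Type*} [Fintype n] [LinearOrder n]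

theorem exists_lt_apply_and_apply_lt_of_ne_one {σ : Perm n} (hσ : σ ≠ 1) :
    ∃ m k, m < σ m ∧ σ k < k ∧ σ m ≤ k ∧ m ≤ σ k := by
  classical
  have hsupp : σ.support.Nonempty := by
    rwa [nonempty_iff_ne_empty, Ne, support_eq_empty_iff]
  have hm := σ.support.min'_mem hsupp
  have hk := σ.support.max'_mem hsupp
  have hσm := apply_mem_support.2 hm
  have hσk := apply_mem_support.2 hk
  refine ⟨_, _, ?_, ?_, le_max' _ _ hσm, min'_le _ _ hσk⟩
  · exact (min'_le _ _ hσm).lt_of_ne (mem_support.1 hm).symm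
  · exact (le_max' _ _ hσk).lt_of_ne (mem_support.1 hk)

variable {R : Type*} [CommRing R] [LinearOrder R] [IsStrictOrderedRing R]
  {b : Matrix n n R} {ε : R}

theorem prod_abs_apply_lt_of_ne_one (hb : ∀ i j, |b i j| ≤ 1)
    (horder : ∀ i' j' i j, j' < i' → j < i → i' ≤ i → j' ≤ j → |b i' j'| ≤ |b i j|)
    (hsmall : ∀ i j, j < i → |b i j * b j i| < ε) {σ : Perm n} (hσ : σ ≠ 1) :
    ∏ i, |b (σ i) i| < ε := by
  classical
  obtain ⟨m, k, hm, hk, hσm, hσk⟩ := exists_lt_apply_and_apply_lt_of_ne_one hσ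
  have hmk : m ≠ k := (hm.trans_le hσm).ne
  calc ∏ i, |b (σ i) i| ≤ ∏ i ∈ {m, k}, |b (σ i) i| :=
        prod_le_prod_of_subset_of_le_one (subset_univ _) (fun _ _ ↦ abs_nonneg _)
          (fun _ _ _ ↦ hb _ _)
    _ = |b (σ m) m| * |b (σ k) k| := prod_pair hmk
    _ ≤ |b k (σ k)| * |b (σ k) k| :=
        mul_le_mul_of_nonneg_right (horder _ _ _ _ hm hk hσm hσk) (abs_nonneg _)
    _ = |b k (σ k) * b (σ k) k| := (abs_mul _ _).symm
    _ < ε := hsmall _ _ hk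

theorem sum_erase_one_prod_abs_lt [DecidableEq n] (hb : ∀ i j, |b i j| ≤ 1)
    (horder : ∀ i' j' i j, j' < i' → j < i → i' ≤ i → j' ≤ j → |b i' j'| ≤ |b i j|)
    (hsmall : ∀ i j, j < i → |b i j * b j i| < ε) (hε : 0 < ε) :
    ∑ σ ∈ univ.erase (1 : Perm n), ∏ i, |b (σ i) i| < (Fintype.card n)! * ε := by
  calc ∑ σ ∈ univ.erase (1 : Perm n), ∏ i, |b (σ i) i|
      ≤ ∑ _σ ∈ univ.erase (1 : Perm n), ε := sum_le_sum fun σ hσ ↦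
        (prod_abs_apply_lt_of_ne_one hb horder hsmall (ne_of_mem_erase hσ)).le
    _ = #(univ.erase (1 : Perm n)) * ε := by rw [sum_const, nsmul_eq_mul]
    _ < #(univ : Finset (Perm n)) * ε :=
        mul_lt_mul_of_pos_right (mod_cast card_erase_lt_of_mem (mem_univ 1)) hε
    _ = (Fintype.card n)! * ε := by rw [card_univ, Fintype.card_perm]

end Equiv.Perm

theorem Matrix.abs_det_sub_prod_diag_le {n R : Type*} [Fintype n] [DecidableEq n] [CommRing R]
    [LinearOrder R] [IsStrictOrderedRing R] (b : Matrix n n R) :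
    |b.det - ∏ i, b i i| ≤ ∑ σ ∈ univ.erase (1 : Perm n), ∏ i, |b (σ i) i| := by
  rw [det_apply', ← add_sum_erase _ _ (mem_univ 1)]
  simp only [Perm.sign_one, Units.val_one, Int.cast_one, Perm.coe_one, id_eq, one_mul,
    add_sub_cancel_left]
  refine (abs_sum_le_sum_abs _ _).trans_eq (sum_congr rfl fun σ _ ↦ ?_)
  rw [abs_mul, abs_prod, ← Int.cast_abs, Perm.sign_abs, Int.cast_one, one_mul]

theorem factorial_pred_mul_div_factorial {d : ℕ} (hd : d ≠ 0) (r : ℝ) :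
    ((d - 1)! : ℝ) * (r / d !) = r / d := by
  rw [← Nat.mul_factorial_pred hd]
  push_cast
  field_simp

theorem permanent_off_diagonal_bound
    (d : ℕ) (hd : 2 ≤ d) (r : ℝ) (hr : 0 < r)
    (b : Matrix (Fin (d - 1)) (Fin (d - 1)) ℝ)
    (hb1 : ∀ i j, |b i j| < 1)
    (horder : ∀ i' j' i j : Fin (d - 1),
      j' < i' → j < i → i' ≤ i → j' ≤ j → |b i' j'| ≤ |b i j|)
    (hsmall : ∀ i j : Fin (d - 1), j < i → |b i j * b j i| < r / (Nat.factorial d)) :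
    (∑ σ ∈ Finset.univ.erase (1 : Equiv.Perm (Fin (d - 1))), ∏ i, |b (σ i) i|) < r / d ∧
    |b.det - ∏ i, b i i| < r / d := by
  have hsum := Perm.sum_erase_one_prod_abs_lt (fun i j ↦ (hb1 i j).le) horder hsmall
    (by positivity)
  rw [Fintype.card_fin, factorial_pred_mul_div_factorial (by omega)] at hsum
  exact ⟨hsum, b.abs_det_sub_prod_diag_le.trans_lt hsum⟩
end
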